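/- For every n ≥ 0 and every choice of signs ε_R ∈ {-1,1}, one has ‖∑_{|R|=2^{-n}} ε_R h_R‖_{L^∞([0,1)²)} ≥ n, i.e., there exists a set of positive measure on which |∑ ε_R h_R| ≥ n. -/

import Mathlib

open MeasureTheory Finset

noncomputable section

/-- The dyadic interval `[m·2^{-k}, (m+1)·2^{-k})`. -/
def dyadicI (k m : ℕ) : Set ℝ :=
  Set.Ico ((m : ℝ) * (2:ℝ)^(-(k:ℤ))) (((m : ℝ) + 1) * (2:ℝ)^(-(k:ℤ)))

/-- The Haar function of the dyadic interval `[m·2^{-k}, (m+1)·2^{-k})`: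
`-1` on the left half, `+1` on the right half, `0` outside. -/
def haarI (k m : ℕ) (x : ℝ) : ℝ :=
  if x ∈ Set.Ico ((m : ℝ) * (2:ℝ)^(-(k:ℤ))) (((m : ℝ) + 1/2) * (2:ℝ)^(-(k:ℤ))) then -1
  else if x ∈ Set.Ico (((m : ℝ) + 1/2) * (2:ℝ)^(-(k:ℤ))) (((m : ℝ) + 1) * (2:ℝ)^(-(k:ℤ))) then 1
  else 0

/-- The Haar function of the dyadic rectangle `[m·2^{-k},(m+1)·2^{-k}) × [m'·2^{-j},(m'+1)·2^{-j})`. -/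
def haarR (k m j m' : ℕ) (p : ℝ × ℝ) : ℝ := haarI k m p.1 * haarI j m' p.2

/-- The signed small ball sum `∑_{|R| = 2^{-n}} ε_R h_R`, where the rectangle of the layer `k`
with horizontal index `m` and vertical index `m'` carries the sign `ε k m m'`. -/
def signedSum (n : ℕ) (ε : ℕ → ℕ → ℕ → ℝ) (p : ℝ × ℝ) : ℝ :=
  ∑ k ∈ Finset.range (n+1), ∑ m ∈ Finset.range (2^k), ∑ m' ∈ Finset.range (2^(n-k)),
    ε k m m' * haarR k m (n-k) m' p

/-- `rad j t = 1` if the `j`-th binary digit `⌊2^j t⌋ mod 2` of `t` is `1`, `-1` otherwise. -/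
def rad (j : ℕ) (t : ℝ) : ℝ := if ⌊(2:ℝ)^j * t⌋ % 2 = 1 then 1 else -1

/-!
On the strip `0 ≤ x < 2^{-(n+1)}` the Haar function of `[0, 2^{-k})` equals `-1` for every
`k ≤ n`, and all other horizontal Haar functions vanish. So in each layer `k` only the rectangles
with horizontal side `[0, 2^{-k})` survive, and their vertical sides are the dyadic intervals of
length `2^{-(n-k)}`, one scale per layer. Choosing the vertical dyadic intervals greedily from the
coarsest scale down, each time the half where `ε_R h_R = 1`, produces a dyadic interval `J` of
length `2^{-(n+1)}` such that the sum equals `n + 1` on the rectangle `[0, 2^{-(n+1)}) × J`.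
-/

lemma mem_Ico_mul_two_zpow_iff (k : ℕ) {a b x : ℝ} :
    x ∈ Set.Ico (a * 2 ^ (-(k : ℤ))) (b * 2 ^ (-(k : ℤ))) ↔ a ≤ 2 ^ k * x ∧ 2 ^ k * x < b := by
  have h2k : (0 : ℝ) < 2 ^ k := by positivity
  rw [zpow_neg, zpow_natCast, ← div_eq_mul_inv, ← div_eq_mul_inv, Set.mem_Ico,
    div_le_iff₀ h2k, lt_div_iff₀ h2k, mul_comm x]

lemma mem_dyadicI_iff {k m : ℕ} {x : ℝ} : x ∈ dyadicI k m ↔ ⌊2 ^ k * x⌋ = m := by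
  rw [dyadicI, mem_Ico_mul_two_zpow_iff, Int.floor_eq_iff]
  push_cast
  rfl

lemma eq_of_mem_dyadicI {k m m' : ℕ} {x : ℝ} (h : x ∈ dyadicI k m) (h' : x ∈ dyadicI k m') :
    m = m' := by
  rw [mem_dyadicI_iff] at h h'
  exact_mod_cast h.symm.trans h'

lemma dyadicI_succ_subset (k m : ℕ) : dyadicI (k + 1) m ⊆ dyadicI k (m / 2) := by
  intro x hx
  rw [mem_dyadicI_iff] at hx ⊢
  rw [show (2 : ℝ) ^ k * x = 2 ^ (k + 1) * x / (2 : ℕ) by push_cast; ring,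
    Int.floor_div_natCast, hx]
  push_cast
  rfl

lemma dyadicI_zero_zero : dyadicI 0 0 = Set.Ico 0 1 := by
  simp [dyadicI]

lemma volume_dyadicI (k m : ℕ) : volume (dyadicI k m) = ENNReal.ofReal (2 ^ (-(k : ℤ))) := by
  rw [dyadicI, Real.volume_Ico]
  ring_nf

lemma haarI_eq_neg_one {k m : ℕ} {x : ℝ} (h : x ∈ dyadicI (k + 1) (2 * m)) :
    haarI k m x = -1 := by
  rw [dyadicI, mem_Ico_mul_two_zpow_iff] at h
  rw [pow_succ, mul_comm _ (2 : ℝ), mul_assoc] at h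
  push_cast at h
  rw [haarI, if_pos ((mem_Ico_mul_two_zpow_iff k).2 ⟨by linarith, by linarith⟩)]

lemma haarI_eq_one {k m : ℕ} {x : ℝ} (h : x ∈ dyadicI (k + 1) (2 * m + 1)) :
    haarI k m x = 1 := by
  rw [dyadicI, mem_Ico_mul_two_zpow_iff] at h
  rw [pow_succ, mul_comm _ (2 : ℝ), mul_assoc] at h
  push_cast at h
  rw [haarI, if_neg, if_pos] <;> rw [mem_Ico_mul_two_zpow_iff]
  · constructor <;> linarith
  · intro h'; linarith

lemma haarI_eq_zero {k m : ℕ} {x : ℝ} (h : x ∉ dyadicI k m) : haarI k m x = 0 := by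
  rw [dyadicI, mem_Ico_mul_two_zpow_iff] at h
  rw [haarI, if_neg, if_neg] <;> rw [mem_Ico_mul_two_zpow_iff] <;> intro h' <;>
    exact h ⟨by linarith [h'.1], by linarith [h'.2]⟩

lemma haarI_eq_zero_of_mem_ne {k m m' : ℕ} {x : ℝ} (hx : x ∈ dyadicI k m) (hm : m' ≠ m) :
    haarI k m' x = 0 :=
  haarI_eq_zero fun hx' => hm (eq_of_mem_dyadicI hx' hx)

lemma sum_sum_mul_haarR_eq {k j a b : ℕ} {x y : ℝ} (c : ℕ → ℕ → ℝ)
    (ha : a < 2 ^ k) (hb : b < 2 ^ j) (hx : x ∈ dyadicI k a) (hy : y ∈ dyadicI j b) :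
    ∑ m ∈ range (2 ^ k), ∑ m' ∈ range (2 ^ j), c m m' * haarR k m j m' (x, y) =
      c a b * haarR k a j b (x, y) := by
  rw [sum_eq_single_of_mem a (mem_range.2 ha), sum_eq_single_of_mem b (mem_range.2 hb)]
  · intro m' _ hm'
    simp [haarR, haarI_eq_zero_of_mem_ne hy hm']
  · intro m _ hm
    refine sum_eq_zero fun m' _ => ?_
    simp [haarR, haarI_eq_zero_of_mem_ne hx hm]

/-- Passing from scale `2^{-j}` to `2^{-(j+1)}`, keep the half of the current vertical interval on
which `ε · h = -1` for the rectangle of layer `n - j` whose horizontal side is `[0, 2^{-(n-j)})`. -/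
def greedyIndex (n : ℕ) (ε : ℕ → ℕ → ℕ → ℝ) : ℕ → ℕ
  | 0 => 0
  | j + 1 => 2 * greedyIndex n ε j + if ε (n - j) 0 (greedyIndex n ε j) = 1 then 0 else 1

section Greedy

variable {n : ℕ} {ε : ℕ → ℕ → ℕ → ℝ}

lemma greedyIndex_lt (j : ℕ) : greedyIndex n ε j < 2 ^ j := by
  induction j with
  | zero => simp [greedyIndex]
  | succ j ih => simp only [greedyIndex, pow_succ]; split <;> omega

lemma greedyIndex_succ_div_two (j : ℕ) : greedyIndex n ε (j + 1) / 2 = greedyIndex n ε j := by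
  simp only [greedyIndex]; split <;> omega

lemma antitone_dyadicI_greedyIndex : Antitone fun j => dyadicI j (greedyIndex n ε j) :=
  antitone_nat_of_succ_le fun j =>
    (greedyIndex_succ_div_two j).symm ▸ dyadicI_succ_subset j _

lemma antitone_dyadicI_zero : Antitone fun j => dyadicI j 0 :=
  antitone_nat_of_succ_le fun j => dyadicI_succ_subset j 0

lemma sign_mul_haarI_greedyIndex (hε : ∀ j m m', ε j m m' = 1 ∨ ε j m m' = -1) {j : ℕ} {y : ℝ}
    (hy : y ∈ dyadicI (j + 1) (greedyIndex n ε (j + 1))) :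
    ε (n - j) 0 (greedyIndex n ε j) * haarI j (greedyIndex n ε j) y = -1 := by
  simp only [greedyIndex] at hy
  rcases hε (n - j) 0 (greedyIndex n ε j) with h | h
  · rw [if_pos h, add_zero] at hy
    rw [h, haarI_eq_neg_one hy, one_mul]
  · rw [if_neg (by rw [h]; norm_num)] at hy
    rw [h, haarI_eq_one hy, mul_one]

lemma signedSum_eq_of_mem (hε : ∀ j m m', ε j m m' = 1 ∨ ε j m m' = -1) {x y : ℝ}
    (hx : x ∈ dyadicI (n + 1) 0) (hy : y ∈ dyadicI (n + 1) (greedyIndex n ε (n + 1))) :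
    signedSum n ε (x, y) = n + 1 := by
  suffices ∀ k ∈ range (n + 1), ∑ m ∈ range (2 ^ k), ∑ m' ∈ range (2 ^ (n - k)),
      ε k m m' * haarR k m (n - k) m' (x, y) = 1 by
    simp [signedSum, sum_congr rfl this]
  intro k hk
  have hkn : k ≤ n := Nat.lt_succ_iff.1 (mem_range.1 hk)
  set j := n - k
  have hx_k : x ∈ dyadicI (k + 1) 0 := antitone_dyadicI_zero (by omega) hx
  have hy_j : y ∈ dyadicI (j + 1) (greedyIndex n ε (j + 1)) :=
    antitone_dyadicI_greedyIndex (by omega) hy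
  rw [sum_sum_mul_haarR_eq _ (by positivity) (greedyIndex_lt j)
    (antitone_dyadicI_zero k.le_succ hx_k)
    (antitone_dyadicI_greedyIndex j.le_succ hy_j)]
  have hsign := sign_mul_haarI_greedyIndex hε hy_j
  rw [show n - j = k by omega] at hsign
  rw [haarR, haarI_eq_neg_one (m := 0) (by simpa using hx_k)]
  linear_combination -hsign

end Greedy

/-- The two-dimensional signed small ball inequality: `|signedSum| ≥ n` on a set of positive
measure, hence `‖signedSum‖_{L^∞} ≥ n`. -/
theorem signed_small_ball_inequality (n : ℕ) (ε : ℕ → ℕ → ℕ → ℝ)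
    (hε : ∀ j m m', ε j m m' = 1 ∨ ε j m m' = -1) :
    0 < volume {p : ℝ × ℝ | p.1 ∈ Set.Ico (0:ℝ) 1 ∧ p.2 ∈ Set.Ico (0:ℝ) 1 ∧
        (n : ℝ) ≤ |signedSum n ε p|} := by
  set I := dyadicI (n + 1) 0
  set J := dyadicI (n + 1) (greedyIndex n ε (n + 1))
  have hsub : I ×ˢ J ⊆ {p : ℝ × ℝ | p.1 ∈ Set.Ico (0:ℝ) 1 ∧ p.2 ∈ Set.Ico (0:ℝ) 1 ∧
      (n : ℝ) ≤ |signedSum n ε p|} := by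
    rintro ⟨x, y⟩ ⟨hx, hy⟩
    refine ⟨dyadicI_zero_zero ▸ antitone_dyadicI_zero (Nat.zero_le _) hx,
      dyadicI_zero_zero ▸ antitone_dyadicI_greedyIndex (Nat.zero_le _) hy, ?_⟩
    rw [signedSum_eq_of_mem hε hx hy, abs_of_nonneg (by positivity)]
    linarith
  refine (measure_mono hsub).trans_lt' ?_
  rw [Measure.volume_eq_prod, Measure.prod_prod, volume_dyadicI, volume_dyadicI]
  positivity
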